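/- Let r ∈ ℕ, l ∈ ℤ, k an integer, and x ∈ ((2l+1)π/r, (2l+2)π/r). Then |sin(rx/2)| ≥ 2(l+1) − rx/π > 0, and consequently both Dirichlet-type kernels satisfy |D̃_{k,r}(x)| ≤ 1/(2(2(l+1) − rx/π)) and |D̃_{k,−r}(x)| ≤ 1/(2(2(l+1) − rx/π)). -/

import Mathlib

noncomputable section

theorem statement6 (r : ℕ) (hr : 1 ≤ r) (l : ℤ) (k : ℤ) (x : ℝ)
    (hx₁ : (2 * l + 1) * Real.pi / r < x) (hx₂ : x < (2 * l + 2) * Real.pi / r) :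
    0 < 2 * ((l : ℝ) + 1) - r * x / Real.pi ∧
    2 * ((l : ℝ) + 1) - r * x / Real.pi ≤ |Real.sin (r * x / 2)| ∧
    |Real.cos (((k : ℝ) + r / 2) * x) / (2 * Real.sin (r * x / 2))| ≤
      1 / (2 * (2 * ((l : ℝ) + 1) - r * x / Real.pi)) ∧
    |Real.cos (((k : ℝ) - r / 2) * x) / (2 * Real.sin (-(r * x / 2)))| ≤
      1 / (2 * (2 * ((l : ℝ) + 1) - r * x / Real.pi)) := by
  have hπ := Real.pi_pos
  have hrR : (0:ℝ) < r := by exact_mod_cast Nat.pos_of_ne_zero (by omega)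
  -- clear the divisions in hypotheses
  have hx₁' : (2 * (l:ℝ) + 1) * Real.pi < r * x := by
    have := (div_lt_iff₀ hrR).mp hx₁; linarith [this]
  have hx₂' : (r:ℝ) * x < (2 * (l:ℝ) + 2) * Real.pi := by
    have := (lt_div_iff₀ hrR).mp hx₂; linarith [this]
  set c : ℝ := 2 * ((l : ℝ) + 1) - r * x / Real.pi with hc
  have hcpos : 0 < c := by
    rw [hc, sub_pos, div_lt_iff₀ hπ]; linarith
  set u : ℝ := ((l:ℝ) + 1) * Real.pi - r * x / 2 with hu
  have hu0 : 0 ≤ u := by rw [hu]; nlinarith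
  have hu2 : u ≤ Real.pi / 2 := by rw [hu]; nlinarith
  have hcu : c = 2 / Real.pi * u := by
    rw [hc, hu]; field_simp
  clear_value c u
  have hsin : |Real.sin (r * x / 2)| = Real.sin u := by
    have h1 : (r:ℝ) * x / 2 = ((l + 1 : ℤ) : ℝ) * Real.pi - u := by
      push_cast; rw [hu]; ring
    have h2 : |((-1:ℝ)) ^ (l+1)| = 1 := by
      rcases Int.even_or_odd (l+1) with h | h
      · rw [h.neg_one_zpow]; norm_num
      · rw [Odd.neg_one_zpow h]; norm_num
    have h3 : u ≤ Real.pi := by linarith [Real.pi_pos]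
    rw [h1, Real.sin_int_mul_pi_sub, abs_neg, abs_mul, h2, one_mul,
      abs_of_nonneg (Real.sin_nonneg_of_nonneg_of_le_pi hu0 h3)]
  have hkey : c ≤ |Real.sin (r * x / 2)| := by
    rw [hsin, hcu]; exact Real.mul_le_sin hu0 hu2
  refine ⟨hcpos, hkey, ?_, ?_⟩
  · rw [abs_div]
    apply div_le_div₀ (by norm_num) (Real.abs_cos_le_one _) (by positivity)
    rw [abs_mul, abs_two]; linarith
  · rw [abs_div]
    apply div_le_div₀ (by norm_num) (Real.abs_cos_le_one _) (by positivity)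
    rw [abs_mul, abs_two, Real.sin_neg, abs_neg]; linarith

end
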